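/- arXiv:2310.08615 — 5 statements merged into one kernel-verified Lean document; each statement's English description precedes it below -/
import Mathlib

section
/- For 1 ≤ n ≤ k, the pmf of the Poisson distribution of order k satisfies p_n = e^{-kλ} Σ_{j=1}^{n} C(n-1, j-1) λ^j / j!. Equivalently, Σ_{n₁+2n₂+...+k·n_k = n} λ^{n₁+...+n_k}/(n₁!···n_k!) = Σ_{j=1}^{n} C(n-1, j-1) λ^j / j! for 1 ≤ n ≤ k. -/
/-!
Grouping the tuples `(n₁, …, n_k)` by `j = n₁ + ⋯ + n_k` and writing
`1 / ∏ nᵢ! = multinomial / j!`, the multinomial theorem identifies the `j`-th group with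
`λ^j / j!` times the coefficient of `X^n` in `(X + X² + ⋯ + X^k)^j`. For `n ≤ k` the truncation
at `X^k` does not affect that coefficient, so it is the coefficient of `X^n` in `(X / (1 - X))^j`,
namely `C(n - 1, j - 1)`.
-/

open Finset

/-- The polynomial part of the pmf of the Poisson distribution of order `k`:
`P k n x = ∑_{n₁+2n₂+⋯+k·n_k = n} x^{n₁+⋯+n_k} / (n₁!⋯n_k!)`. -/
noncomputable def poissonOrderKSum (k n : ℕ) (x : ℝ) : ℝ :=
  ∑ f ∈ ((Fintype.piFinset fun _ : Fin k => Finset.range (n + 1)).filter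
      fun f => ∑ i : Fin k, (i.1 + 1) * f i = n),
    x ^ (∑ i : Fin k, f i) / ∏ i : Fin k, (Nat.factorial (f i) : ℝ)

open scoped Nat

namespace PowerSeries

section CommSemiring

variable {R : Type*} [CommSemiring R]

theorem coeff_pow_eq_of_coeff_eq {n : ℕ} {f g : R⟦X⟧} (h : ∀ m ≤ n, coeff m f = coeff m g)
    (a : ℕ) : coeff n (f ^ a) = coeff n (g ^ a) := by
  have htrunc : trunc (n + 1) f = trunc (n + 1) g := by
    ext m
    simp only [coeff_trunc]
    split_ifs with hm
    · exact h m (Nat.lt_succ_iff.mp hm)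
    · rfl
  have htrunc_pow : trunc (n + 1) (f ^ a) = trunc (n + 1) (g ^ a) := by
    rw [← trunc_trunc_pow, htrunc, trunc_trunc_pow]
  simpa [coeff_trunc] using congrArg (Polynomial.coeff · n) htrunc_pow

theorem coeff_pow_sum_X_pow {ι : Type*} [DecidableEq ι] (s : Finset ι) (w : ι → ℕ) (j n : ℕ) :
    coeff n ((∑ i ∈ s, X ^ w i : R⟦X⟧) ^ j) =
      ∑ g ∈ (piAntidiag s j).filter (fun g => ∑ i ∈ s, w i * g i = n),
        (Nat.multinomial s g : R) := by
  rw [sum_pow_eq_sum_piAntidiag, map_sum, sum_filter]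
  refine sum_congr rfl fun g _ => ?_
  simp_rw [← pow_mul, prod_pow_eq_pow_sum, ← map_natCast (C (R := R)), coeff_C_mul_X_pow,
    eq_comm]

theorem coeff_sum_range_X_pow_succ {k m : ℕ} (hm : m ≤ k) :
    coeff m (∑ i ∈ range k, X ^ (i + 1) : R⟦X⟧) = coeff m (X * mk 1) := by
  rcases m with _ | m
  · simp [coeff_X_pow]
  · simp only [map_sum, coeff_X_pow, Nat.add_right_cancel_iff, sum_ite_eq, mem_range,
      coeff_succ_X_mul, coeff_mk, Pi.one_apply, ite_eq_left_iff, not_lt]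
    omega

end CommSemiring

theorem coeff_pow_sum_range_X_pow_succ {R : Type*} [CommRing R] {k n j : ℕ} (hj : 1 ≤ j)
    (hjn : j ≤ n) (hnk : n ≤ k) :
    coeff n ((∑ i ∈ range k, X ^ (i + 1) : R⟦X⟧) ^ j) = (n - 1).choose (j - 1) := by
  obtain ⟨d, rfl⟩ : ∃ d, j = d + 1 := ⟨j - 1, by omega⟩
  rw [coeff_pow_eq_of_coeff_eq (fun m hm => coeff_sum_range_X_pow_succ (hm.trans hnk)),
    mul_pow, X_pow_mul, coeff_mul_X_pow', if_pos hjn, mk_one_pow_eq_mk_choose_add, coeff_mk]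
  congr 2; omega

end PowerSeries

theorem Nat.inv_prod_factorial_eq_multinomial_div {ι K : Type*} [Field K] [CharZero K]
    (s : Finset ι) (f : ι → ℕ) :
    (∏ i ∈ s, ((f i)! : K))⁻¹ = Nat.multinomial s f / ((∑ i ∈ s, f i)! : K) := by
  have hprod : ∏ i ∈ s, ((f i)! : K) ≠ 0 :=
    prod_ne_zero_iff.mpr fun i _ => Nat.cast_ne_zero.mpr (f i).factorial_ne_zero
  rw [eq_div_iff (Nat.cast_ne_zero.mpr (Nat.factorial_ne_zero _)), ← Nat.multinomial_spec,
    Nat.cast_mul, Nat.cast_prod, inv_mul_cancel_left₀ hprod]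

theorem Fin.sum_le_sum_val_add_one_mul {k : ℕ} (f : Fin k → ℕ) :
    ∑ i, f i ≤ ∑ i : Fin k, (i.1 + 1) * f i :=
  sum_le_sum fun i _ => Nat.le_mul_of_pos_left _ i.1.succ_pos

open PowerSeries in
theorem poissonOrderKSum_eq_sum_coeff (k n : ℕ) (x : ℝ) :
    poissonOrderKSum k n x = ∑ j ∈ range (n + 1),
      x ^ j / j ! * coeff n ((∑ i : Fin k, X ^ (i.1 + 1) : ℝ⟦X⟧) ^ j) := by
  set A := (Fintype.piFinset fun _ : Fin k => range (n + 1)).filter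
    fun f => ∑ i : Fin k, (i.1 + 1) * f i = n
  have hmaps : ∀ f ∈ A, ∑ i, f i ∈ range (n + 1) := by
    intro f hf
    rw [mem_filter] at hf
    exact mem_range_succ_iff.mpr (hf.2 ▸ Fin.sum_le_sum_val_add_one_mul f)
  have hfiber : ∀ j, A.filter (fun f => ∑ i, f i = j) =
      (piAntidiag univ j).filter fun f => ∑ i : Fin k, (i.1 + 1) * f i = n := by
    intro j
    ext f
    simp only [A, mem_filter, Fintype.mem_piFinset, mem_piAntidiag, mem_univ, implies_true,
      and_true, mem_range_succ_iff]
    constructor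
    · rintro ⟨⟨-, hw⟩, hs⟩
      exact ⟨hs, hw⟩
    · rintro ⟨hs, hw⟩
      refine ⟨⟨fun i => ?_, hw⟩, hs⟩
      exact hw ▸ (single_le_sum (fun i _ => Nat.zero_le (f i)) (mem_univ i)).trans
        (Fin.sum_le_sum_val_add_one_mul f)
  unfold poissonOrderKSum
  rw [← sum_fiberwise_of_maps_to hmaps]
  refine sum_congr rfl fun j _ => ?_
  rw [hfiber, coeff_pow_sum_X_pow, mul_sum]
  refine sum_congr rfl fun f hf => ?_
  have hs : ∑ i, f i = j := (mem_piAntidiag.mp (mem_filter.mp hf).1).1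
  rw [div_eq_mul_inv, Nat.inv_prod_factorial_eq_multinomial_div, hs]
  ring

theorem poissonOrderK_pmf_small_n (k n : ℕ) (hn1 : 1 ≤ n) (hnk : n ≤ k) (lam : ℝ) :
    poissonOrderKSum k n lam =
      ∑ j ∈ Finset.Icc 1 n, (Nat.choose (n - 1) (j - 1) : ℝ) * lam ^ j / (Nat.factorial j : ℝ) := by
  rw [poissonOrderKSum_eq_sum_coeff, range_eq_Ico, sum_eq_sum_Ico_succ_bot n.add_one_pos,
    pow_zero, pow_zero, PowerSeries.coeff_one, if_neg (by omega), mul_zero, zero_add,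
    zero_add, Ico_add_one_right_eq_Icc,
    Fin.sum_univ_eq_sum_range fun i => (PowerSeries.X : PowerSeries ℝ) ^ (i + 1)]
  refine sum_congr rfl fun j hj => ?_
  rw [mem_Icc] at hj
  rw [PowerSeries.coeff_pow_sum_range_X_pow_succ hj.1 (by omega) hnk]
  ring
end

section
/- The two combinatorial sums for the Poisson pmf of order k agree: for n = rk + m with m ∈ {1,...,k}, r ≥ 1, writing n = ℓ(k+1) + m' with m' ∈ {0,...,k}, we have Σ_{j=1}^{n} C(n-1,j-1) λ^j/j! − Σ_{i=1}^{ℓ} (−1)^{i−1} (λ^i/i!) Σ_{j=0}^{n−i(k+1)} C(n−i(k+1)+i−1, j+i−1) λ^j/j! = Σ_{j=r+1}^{n} C(n-1,j-1) λ^j/j! − Σ_{i=1}^{r} (−1)^{i−1} (λ^i/i!) Σ_{j=r+1−i}^{n−ik−1} C(n−ik−1, j+i−1) λ^j/j!, as polynomial identities in λ. -/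
/-!
Write `c i = (-1)^(i-1) λ^i/i!` and `g i j = C(n-ik-1, j+i-1) λ^j/j!`. The inner sums on the left
are `∑_{j ≤ n-i(k+1)} g i j`, and `g i j = 0` for `j > n-i(k+1)`; moreover `g i j = 0` for all
`j < n-ik` when `ℓ < i ≤ r`. So the left correction term is `∑_{i ≤ r} c i ∑_{j < n-ik} g i j`.
Splitting the inner sum at `j = r-i` gives the right correction term plus the triangle
`∑_{i+j ≤ r} c i g i j`, which is the head `∑_{t ≤ r} C(n-1,t-1) λ^t/t!` of the first sum: after
clearing factorials, comparing coefficients of `λ^t` amounts to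
`∑_{i=0}^t (-1)^i C(t,i) C(n-1-ik, t-1) = 0`, a `t`-th forward difference of a polynomial in `i`
of degree `t-1`.
-/

open Finset Polynomial Nat

theorem Polynomial.alternating_sum_range_choose_mul_eval_eq_zero {R : Type*} [CommRing R]
    {P : R[X]} {t : ℕ} (hP : P.natDegree < t) :
    ∑ i ∈ range (t + 1), (-1 : R) ^ i * t.choose i * P.eval (i : R) = 0 := by
  have h := congrFun (fwdDiff_iter_eq_zero_of_degree_lt hP) 0
  rw [fwdDiff_iter_eq_sum_shift, Pi.zero_apply] at h
  rw [← mul_eq_zero_of_right ((-1 : R) ^ t) h, mul_sum]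
  refine sum_congr rfl fun i hi => ?_
  have hsign : (-1 : R) ^ i = (-1) ^ t * (-1) ^ (t - i) := by
    rw [← pow_add, show t + (t - i) = i + 2 * (t - i) by grind, pow_add, pow_mul]
    simp
  simp only [hsign, zsmul_eq_mul, nsmul_eq_mul, zero_add, mul_one]
  push_cast
  ring

theorem alternating_sum_range_choose_mul_choose_sub_mul_eq_zero {s t k a : ℕ}
    (hs : s < t) (h : t * k ≤ a) :
    ∑ i ∈ range (t + 1), (-1 : ℤ) ^ i * t.choose i * (a - i * k).choose s = 0 := by
  set P : ℤ[X] := (descPochhammer ℤ s).comp (C (a : ℤ) - C (k : ℤ) * X)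
  have hdeg : P.natDegree < t := by
    refine lt_of_le_of_lt natDegree_comp_le ?_
    rw [descPochhammer_natDegree]
    have : (C (a : ℤ) - C (k : ℤ) * X).natDegree ≤ 1 := by compute_degree
    nlinarith
  have heval : ∀ i ∈ range (t + 1), P.eval (i : ℤ) = s ! * (a - i * k).choose s := by
    intro i hi
    have hik : i * k ≤ a := le_trans (Nat.mul_le_mul_right k (by grind)) h
    have : (a : ℤ) - k * i = ((a - i * k : ℕ) : ℤ) := by push_cast [Nat.cast_sub hik]; ring
    simp [P, this, descPochhammer_eval_eq_descFactorial, Nat.descFactorial_eq_factorial_mul_choose]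
  have h0 := alternating_sum_range_choose_mul_eval_eq_zero hdeg
  rw [sum_congr rfl fun i hi => by rw [heval i hi]] at h0
  refine mul_left_cancel₀ (Nat.cast_ne_zero.mpr (factorial_ne_zero s) : (s ! : ℤ) ≠ 0) ?_
  rw [mul_zero, mul_sum, ← h0]
  exact sum_congr rfl fun i _ => by ring

theorem choose_eq_sum_Icc_alternating_choose_mul_choose_sub_mul {s t k a : ℕ}
    (hs : s < t) (h : t * k ≤ a) :
    (a.choose s : ℤ) = ∑ i ∈ Icc 1 t, (-1 : ℤ) ^ (i - 1) * t.choose i * (a - i * k).choose s := by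
  have h0 := alternating_sum_range_choose_mul_choose_sub_mul_eq_zero hs h
  rw [range_eq_Ico, sum_eq_sum_Ico_succ_bot (by omega), Ico_add_one_right_eq_Icc] at h0
  simp only [pow_zero, choose_zero_right, zero_mul, Nat.sub_zero, cast_one, one_mul] at h0
  rw [eq_neg_of_add_eq_zero_left h0, ← sum_neg_distrib]
  refine sum_congr rfl fun i hi => ?_
  obtain ⟨j, rfl⟩ : ∃ j, i = j + 1 := ⟨i - 1, by grind⟩
  simp [pow_succ]

theorem choose_mul_pow_div_factorial_eq_sum_Icc {K : Type*} [Field K] [CharZero K] (x : K)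
    {n k t : ℕ} (ht : 0 < t) (h : t * k < n) :
    ((n - 1).choose (t - 1) : K) * x ^ t / t ! =
      ∑ i ∈ Icc 1 t, (-1) ^ (i - 1) * x ^ i / i ! *
        (((n - i * k - 1).choose (t - i + i - 1) : K) * x ^ (t - i) / (t - i) !) := by
  have hcomb := choose_eq_sum_Icc_alternating_choose_mul_choose_sub_mul
    (s := t - 1) (t := t) (k := k) (a := n - 1) (by omega) (by omega)
  rw [← Int.cast_natCast, hcomb]
  push_cast
  rw [sum_mul, sum_div]
  refine sum_congr rfl fun i hi => ?_
  have hit : i ≤ t := (mem_Icc.mp hi).2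
  have hfac : (t.choose i : K) * i ! * (t - i) ! = t ! := by
    exact_mod_cast choose_mul_factorial_mul_factorial hit
  have hchoose : (t.choose i : K) ≠ 0 := Nat.cast_ne_zero.mpr (choose_pos hit).ne'
  rw [show t - i + i - 1 = t - 1 by omega, show n - i * k - 1 = n - 1 - i * k by omega,
    ← hfac, show x ^ t = x ^ i * x ^ (t - i) by rw [← pow_add, Nat.add_sub_cancel' hit]]
  field_simp

theorem sum_Icc_one_diag_flip {M : Type*} [AddCommMonoid M] (r : ℕ) (f : ℕ → ℕ → M) :
    ∑ t ∈ Icc 1 r, ∑ i ∈ Icc 1 t, f i (t - i) = ∑ i ∈ Icc 1 r, ∑ j ∈ range (r + 1 - i), f i j := by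
  simp only [← Ico_add_one_right_eq_Icc, sum_Ico_eq_sum_range, add_tsub_cancel_right,
    add_comm 1, Nat.add_sub_add_right]
  exact sum_range_diag_flip r fun i j => f (i + 1) j

theorem sum_Icc_one_add_sum_Icc_add_one {M : Type*} [AddCommMonoid M] (f : ℕ → M) {r n : ℕ}
    (h : r ≤ n) : ∑ j ∈ Icc 1 r, f j + ∑ j ∈ Icc (r + 1) n, f j = ∑ j ∈ Icc 1 n, f j := by
  have hIoc (b : ℕ) : Icc 1 b = Ioc 0 b := Icc_add_one_left_eq_Ioc 0 b
  rw [hIoc, hIoc, Icc_add_one_left_eq_Ioc, sum_Ioc_consecutive f (Nat.zero_le r) h]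

theorem sum_range_add_sum_Icc_sub_one {M : Type*} [AddCommMonoid M] (f : ℕ → M) {p q : ℕ}
    (hpq : p ≤ q) (hq : 0 < q) :
    ∑ j ∈ range p, f j + ∑ j ∈ Icc p (q - 1), f j = ∑ j ∈ range q, f j := by
  rw [← Ico_add_one_right_eq_Icc, show q - 1 + 1 = q by omega, sum_range_add_sum_Ico f hpq]

theorem sum_range_choose_mul_pow_div_factorial_eq_of_le {K : Type*} [DivisionSemiring K] (x : K)
    {N i a b : ℕ} (hab : a ≤ b) (ha : N + 1 < a + i) :
    ∑ j ∈ range a, (N.choose (j + i - 1) : K) * x ^ j / j ! =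
      ∑ j ∈ range b, (N.choose (j + i - 1) : K) * x ^ j / j ! := by
  refine sum_subset (range_subset_range.mpr hab) fun j _ hj => ?_
  rw [choose_eq_zero_of_lt (by grind), Nat.cast_zero, zero_mul, zero_div]

theorem sum_Icc_mul_sum_range_extend {K : Type*} [DivisionRing K] (x : K)
    {n k ℓ r : ℕ} (hℓ : ℓ * (k + 1) ≤ n) (hℓ' : n < (ℓ + 1) * (k + 1)) (hℓr : ℓ ≤ r) :
    ∑ i ∈ Icc 1 ℓ, (-1) ^ (i - 1) * x ^ i / i ! *
        ∑ j ∈ range (n - i * (k + 1) + 1),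
          ((n - i * (k + 1) + i - 1).choose (j + i - 1) : K) * x ^ j / j ! =
      ∑ i ∈ Icc 1 r, (-1) ^ (i - 1) * x ^ i / i ! *
        ∑ j ∈ range (n - i * k), ((n - i * k - 1).choose (j + i - 1) : K) * x ^ j / j ! := by
  refine sum_subset_zero_on_sdiff (Icc_subset_Icc_right hℓr) (fun i hi => ?_)
    (fun i hi => ?_)
  · obtain ⟨⟨hi1, -⟩, hiℓ⟩ : (1 ≤ i ∧ i ≤ r) ∧ ¬(1 ≤ i ∧ i ≤ ℓ) := by simpa using hi
    have : n < i * k + i := by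
      rw [← Nat.mul_add_one]; exact lt_of_lt_of_le hℓ' (Nat.mul_le_mul_right _ (by omega))
    refine mul_eq_zero_of_right _ (sum_eq_zero fun j hj => ?_)
    rw [choose_eq_zero_of_lt (by grind), Nat.cast_zero, zero_mul, zero_div]
  · obtain ⟨hi1, hiℓ⟩ := mem_Icc.mp hi
    have hik : i * (k + 1) = i * k + i := Nat.mul_add_one i k
    have : i * (k + 1) ≤ n := (Nat.mul_le_mul_right _ hiℓ).trans hℓ
    rw [show n - i * (k + 1) + i - 1 = n - i * k - 1 by omega,
      sum_range_choose_mul_pow_div_factorial_eq_of_le x (b := n - i * k) (by omega) (by omega)]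

theorem sum_Icc_mul_sum_range_split {K : Type*} [Field K] [CharZero K] (x : K) {n k r : ℕ}
    (hk : 0 < k) (hrn : r * k < n) :
    ∑ i ∈ Icc 1 r, (-1) ^ (i - 1) * x ^ i / i ! *
        ∑ j ∈ range (n - i * k), ((n - i * k - 1).choose (j + i - 1) : K) * x ^ j / j ! =
      ∑ t ∈ Icc 1 r, ((n - 1).choose (t - 1) : K) * x ^ t / t ! +
      ∑ i ∈ Icc 1 r, (-1) ^ (i - 1) * x ^ i / i ! *
        ∑ j ∈ Icc (r + 1 - i) (n - i * k - 1),
          ((n - i * k - 1).choose (j + i - 1) : K) * x ^ j / j ! := by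
  have hsplit : ∀ i ∈ Icc 1 r,
      ∑ j ∈ range (n - i * k), ((n - i * k - 1).choose (j + i - 1) : K) * x ^ j / j ! =
        ∑ j ∈ range (r + 1 - i), ((n - i * k - 1).choose (j + i - 1) : K) * x ^ j / j ! +
        ∑ j ∈ Icc (r + 1 - i) (n - i * k - 1),
          ((n - i * k - 1).choose (j + i - 1) : K) * x ^ j / j ! := by
    intro i hi
    have hir := (mem_Icc.mp hi).2
    have : (r - i) * k + i * k = r * k := by rw [← Nat.add_mul, Nat.sub_add_cancel hir]
    have : r - i ≤ (r - i) * k := Nat.le_mul_of_pos_right _ hk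
    exact (sum_range_add_sum_Icc_sub_one _ (by omega) (by omega)).symm
  have hhead : ∀ t ∈ Icc 1 r, ((n - 1).choose (t - 1) : K) * x ^ t / t ! =
      ∑ i ∈ Icc 1 t, (-1) ^ (i - 1) * x ^ i / i ! *
        (((n - i * k - 1).choose (t - i + i - 1) : K) * x ^ (t - i) / (t - i) !) := by
    intro t ht
    have : t * k ≤ r * k := Nat.mul_le_mul_right _ (mem_Icc.mp ht).2
    exact choose_mul_pow_div_factorial_eq_sum_Icc x (mem_Icc.mp ht).1 (by omega)
  rw [sum_congr rfl fun i hi => by rw [hsplit i hi, mul_add], sum_add_distrib,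
    sum_congr rfl hhead]
  simp only [mul_sum]
  rw [← sum_Icc_one_diag_flip]

theorem two_combinatorial_sums_agree_general (k n r m ℓ m' : ℕ) (hk : 2 ≤ k)
    (hm1 : 1 ≤ m) (hmk : m ≤ k) (hn : n = r * k + m)
    (hm'k : m' ≤ k) (hn' : n = ℓ * (k + 1) + m') (lam : ℝ) :
    (∑ j ∈ Finset.Icc 1 n, (Nat.choose (n - 1) (j - 1) : ℝ) * lam ^ j / (Nat.factorial j : ℝ))
      - (∑ i ∈ Finset.Icc 1 ℓ, (-1 : ℝ) ^ (i - 1) * lam ^ i / (Nat.factorial i : ℝ) *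
          ∑ j ∈ Finset.range (n - i * (k + 1) + 1),
            (Nat.choose (n - i * (k + 1) + i - 1) (j + i - 1) : ℝ) * lam ^ j /
              (Nat.factorial j : ℝ))
    =
    (∑ j ∈ Finset.Icc (r + 1) n,
        (Nat.choose (n - 1) (j - 1) : ℝ) * lam ^ j / (Nat.factorial j : ℝ))
      - (∑ i ∈ Finset.Icc 1 r, (-1 : ℝ) ^ (i - 1) * lam ^ i / (Nat.factorial i : ℝ) *
          ∑ j ∈ Finset.Icc (r + 1 - i) (n - i * k - 1),
            (Nat.choose (n - i * k - 1) (j + i - 1) : ℝ) * lam ^ j /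
              (Nat.factorial j : ℝ)) := by
  have hrk : r * k < n := by omega
  have hrn : r ≤ n := le_of_lt (lt_of_le_of_lt (Nat.le_mul_of_pos_right r (by omega)) hrk)
  have hℓ : ℓ * (k + 1) ≤ n := by omega
  have hℓ' : n < (ℓ + 1) * (k + 1) := by rw [add_one_mul]; omega
  have hℓr : ℓ ≤ r := by
    by_contra! h
    have : (r + 1) * (k + 1) ≤ ℓ * (k + 1) := Nat.mul_le_mul_right _ h
    rw [add_one_mul, mul_add_one] at this
    omega
  rw [← sum_Icc_one_add_sum_Icc_add_one _ hrn, sum_Icc_mul_sum_range_extend lam hℓ hℓ' hℓr,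
    sum_Icc_mul_sum_range_split lam (by omega) hrk]
  ring

theorem two_combinatorial_sums_agree (k n r m ℓ m' : ℕ) (hk : 2 ≤ k) (hr : 1 ≤ r)
    (hm1 : 1 ≤ m) (hmk : m ≤ k) (hn : n = r * k + m)
    (hm'k : m' ≤ k) (hn' : n = ℓ * (k + 1) + m') (lam : ℝ) :
    (∑ j ∈ Finset.Icc 1 n, (Nat.choose (n - 1) (j - 1) : ℝ) * lam ^ j / (Nat.factorial j : ℝ))
      - (∑ i ∈ Finset.Icc 1 ℓ, (-1 : ℝ) ^ (i - 1) * lam ^ i / (Nat.factorial i : ℝ) *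
          ∑ j ∈ Finset.range (n - i * (k + 1) + 1),
            (Nat.choose (n - i * (k + 1) + i - 1) (j + i - 1) : ℝ) * lam ^ j /
              (Nat.factorial j : ℝ))
    =
    (∑ j ∈ Finset.Icc (r + 1) n,
        (Nat.choose (n - 1) (j - 1) : ℝ) * lam ^ j / (Nat.factorial j : ℝ))
      - (∑ i ∈ Finset.Icc 1 r, (-1 : ℝ) ^ (i - 1) * lam ^ i / (Nat.factorial i : ℝ) *
          ∑ j ∈ Finset.Icc (r + 1 - i) (n - i * k - 1),
            (Nat.choose (n - i * k - 1) (j + i - 1) : ℝ) * lam ^ j /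
              (Nat.factorial j : ℝ)) :=
  two_combinatorial_sums_agree_general k n r m ℓ m' hk hm1 hmk hn hm'k hn' lam
end

section
/- Recurrence for the pmf polynomials: with P_n(λ) = Σ_{n₁+2n₂+...+k·n_k = n} λ^{n₁+...+n_k}/(n₁!···n_k!), one has the recurrence n·P_n(λ) = λ Σ_{i=1}^{min(n,k)} i·P_{n−i}(λ) for n ≥ 1, with P_0(λ) = 1. -/
/-!
Writing `n` as the weight `∑ i nᵢ` of each tuple `(n₁, …, n_k)` in the sum gives
`n P_n = ∑ᵢ i ∑ nᵢ λ^{∑ nⱼ} / ∏ nⱼ!`. Lowering `nᵢ` by one is a bijection from the tuples of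
weight `n` with `nᵢ ≥ 1` onto the tuples of weight `n - i`, and it turns `nᵢ λ^{∑ nⱼ} / ∏ nⱼ!`
into `λ` times the term of the lowered tuple. Hence the `i`-th inner sum is `λ P_{n-i}` when
`i ≤ n`, and `0` when `i > n` since then `nᵢ = 0`.
-/

open Finset

namespace PoissonOrderK

section Term

variable {ι K : Type*} [Fintype ι] [Field K]

noncomputable def term (x : K) (f : ι → ℕ) : K :=
  x ^ (∑ i, f i) / ∏ i, ((f i).factorial : K)

lemma term_zero (x : K) : term x (0 : ι → ℕ) = 1 := by
  simp [term]

lemma succ_mul_term_add_single [DecidableEq ι] [CharZero K] (x : K) (g : ι → ℕ) (i : ι) :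
    ((g i + 1 : ℕ) : K) * term x (g + Pi.single i 1) = x * term x g := by
  have hsum : ∑ j, (g + Pi.single i 1 : ι → ℕ) j = (∑ j, g j) + 1 := by
    simp [sum_add_distrib]
  have hprod : ∏ j, ((g + Pi.single i 1 : ι → ℕ) j).factorial =
      (g i + 1) * ∏ j, (g j).factorial := by
    rw [← mul_prod_erase _ _ (mem_univ i), ← mul_prod_erase _ _ (mem_univ i), ← mul_assoc,
      Pi.add_apply, Pi.single_eq_same, ← Nat.factorial_succ]
    congr 1
    refine prod_congr rfl fun j hj => ?_
    rw [Pi.add_apply, Pi.single_eq_of_ne (ne_of_mem_erase hj), add_zero]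
  simp only [term, hsum, pow_succ]
  rw [← Nat.cast_prod, hprod, Nat.cast_mul, Nat.cast_prod]
  field_simp

end Term

lemma single_le_iff {ι : Type*} [DecidableEq ι] {f : ι → ℕ} {i : ι} {a : ℕ} :
    Pi.single i a ≤ f ↔ a ≤ f i := by
  refine ⟨fun h => by simpa using h i, fun h j => ?_⟩
  rcases eq_or_ne j i with rfl | hj
  · simpa using h
  · simp [Pi.single_eq_of_ne hj]

/-- `f i` is the multiplicity `n_{i+1}` of the part `i + 1`. -/
def weight {k : ℕ} (f : Fin k → ℕ) : ℕ := ∑ i : Fin k, (i.1 + 1) * f i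

def tuplesOfWeight (k n : ℕ) : Finset (Fin k → ℕ) :=
  (Fintype.piFinset fun _ : Fin k => range (n + 1)).filter fun f => weight f = n

lemma poissonOrderKSum_eq (k n : ℕ) (x : ℝ) :
    poissonOrderKSum k n x = ∑ f ∈ tuplesOfWeight k n, term x f := rfl

variable {k : ℕ}

lemma le_weight (f : Fin k → ℕ) (i : Fin k) : (i.1 + 1) * f i ≤ weight f :=
  single_le_sum (f := fun j : Fin k => (j.1 + 1) * f j) (fun _ _ => Nat.zero_le _) (mem_univ i)

lemma weight_add (f g : Fin k → ℕ) : weight (f + g) = weight f + weight g := by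
  simp [weight, mul_add, sum_add_distrib]

lemma weight_single (i : Fin k) : weight (Pi.single i 1) = i.1 + 1 := by
  simp [weight, Pi.single_apply]

lemma mem_tuplesOfWeight {n : ℕ} {f : Fin k → ℕ} : f ∈ tuplesOfWeight k n ↔ weight f = n := by
  refine ⟨fun h => (mem_filter.mp h).2, fun h => mem_filter.mpr ⟨?_, h⟩⟩
  refine Fintype.mem_piFinset.mpr fun i => mem_range.mpr ?_
  have := le_weight f i
  have : f i ≤ (i.1 + 1) * f i := Nat.le_mul_of_pos_left _ i.1.succ_pos
  omega

lemma tuplesOfWeight_zero : tuplesOfWeight k 0 = {0} := by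
  ext f
  simp [mem_tuplesOfWeight, weight, funext_iff]

lemma apply_eq_zero_of_mem_tuplesOfWeight {n : ℕ} {f : Fin k → ℕ} (hf : f ∈ tuplesOfWeight k n)
    {i : Fin k} (hi : n < i.1 + 1) : f i = 0 := by
  have := le_weight f i
  rw [mem_tuplesOfWeight.mp hf] at this
  by_contra h
  have : i.1 + 1 ≤ (i.1 + 1) * f i := Nat.le_mul_of_pos_right _ (Nat.pos_of_ne_zero h)
  omega

lemma natCast_mul_sum_term {K : Type*} [Field K] (x : K) (n : ℕ) :
    (n : K) * ∑ f ∈ tuplesOfWeight k n, term x f =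
      ∑ i : Fin k, ((i.1 + 1 : ℕ) : K) * ∑ f ∈ tuplesOfWeight k n, (f i : K) * term x f := by
  simp_rw [mul_sum]
  rw [sum_comm]
  refine sum_congr rfl fun f hf => ?_
  rw [← mem_tuplesOfWeight.mp hf, weight, Nat.cast_sum, sum_mul]
  refine sum_congr rfl fun i _ => ?_
  push_cast
  ring

lemma sum_apply_mul_term {K : Type*} [Field K] [CharZero K] (x : K) (m : ℕ) (i : Fin k) :
    ∑ f ∈ tuplesOfWeight k (m + (i.1 + 1)), (f i : K) * term x f =
      x * ∑ g ∈ tuplesOfWeight k m, term x g := by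
  rw [← sum_filter_of_ne (p := fun f => f i ≠ 0) fun f _ h hf => h (by simp [hf]), mul_sum]
  have cancel {f : Fin k → ℕ} (hf : f ∈ (tuplesOfWeight k (m + (i.1 + 1))).filter (· i ≠ 0)) :
      f - Pi.single i 1 + Pi.single i 1 = f :=
    tsub_add_cancel_of_le (single_le_iff.mpr (Nat.one_le_iff_ne_zero.mpr (mem_filter.mp hf).2))
  refine sum_nbij' (fun f => f - Pi.single i 1) (fun g => g + Pi.single i 1) ?_ ?_ ?_ ?_ ?_
  · intro f hf
    have hw := weight_add (f - Pi.single i 1) (Pi.single i 1)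
    rw [cancel hf, weight_single, mem_tuplesOfWeight.mp (mem_filter.mp hf).1] at hw
    exact mem_tuplesOfWeight.mpr (by omega)
  · intro g hg
    simp [mem_tuplesOfWeight, weight_add, weight_single, mem_tuplesOfWeight.mp hg]
  · intro f hf
    exact cancel hf
  · intro g _
    exact add_tsub_cancel_right g _
  · intro f hf
    rw [← succ_mul_term_add_single, cancel hf]
    simp [Nat.sub_add_cancel (Nat.one_le_iff_ne_zero.mpr (mem_filter.mp hf).2)]

lemma sum_fin_ite_eq_sum_Icc {M : Type*} [AddCommMonoid M] (F : ℕ → M) (n : ℕ) :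
    ∑ i : Fin k, (if i.1 + 1 ≤ n then F (i.1 + 1) else 0) = ∑ m ∈ Icc 1 (min n k), F m := by
  rw [Fin.sum_univ_eq_sum_range (fun i => if i + 1 ≤ n then F (i + 1) else 0), ← sum_filter]
  refine sum_nbij' (· + 1) (· - 1) ?_ ?_ ?_ ?_ fun _ _ => rfl <;> intro m hm <;>
    simp only [mem_filter, mem_range, mem_Icc] at hm ⊢ <;> omega

end PoissonOrderK

open PoissonOrderK in
theorem poissonOrderK_recurrence_general (k : ℕ) (lam : ℝ) :
    poissonOrderKSum k 0 lam = 1 ∧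
    ∀ n : ℕ, 1 ≤ n →
      (n : ℝ) * poissonOrderKSum k n lam =
        lam * ∑ i ∈ Finset.Icc 1 (min n k), (i : ℝ) * poissonOrderKSum k (n - i) lam := by
  refine ⟨by rw [poissonOrderKSum_eq, tuplesOfWeight_zero, sum_singleton, term_zero], fun n _ => ?_⟩
  rw [poissonOrderKSum_eq, natCast_mul_sum_term, ← sum_fin_ite_eq_sum_Icc, mul_sum]
  refine sum_congr rfl fun i _ => ?_
  split_ifs with hi
  · obtain ⟨m, rfl⟩ : ∃ m, n = m + (i.1 + 1) := ⟨n - (i.1 + 1), by omega⟩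
    rw [sum_apply_mul_term, Nat.add_sub_cancel, poissonOrderKSum_eq]
    ring
  · rw [sum_eq_zero fun f hf => by
      simp [apply_eq_zero_of_mem_tuplesOfWeight hf (not_le.mp hi)]]
    simp

theorem poissonOrderK_recurrence (k : ℕ) (hk : 1 ≤ k) (lam : ℝ) :
    poissonOrderKSum k 0 lam = 1 ∧
    ∀ n : ℕ, 1 ≤ n →
      (n : ℝ) * poissonOrderKSum k n lam =
        lam * ∑ i ∈ Finset.Icc 1 (min n k), (i : ℝ) * poissonOrderKSum k (n - i) lam :=
  poissonOrderK_recurrence_general k lam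
end

section
/- The coefficient of λ^{r+1} in the pmf polynomial P_n(λ) of the Poisson distribution of order k, for n = rk + m with m ∈ {1,...,k}, equals the sum, over all nonnegative integer solutions (n₁,...,n_k) of n₁+2n₂+...+k n_k = n with n₁+...+n_k = r+1, of 1/(n₁!···n_k!), and this coefficient is nonzero. -/
open Finset Polynomial

/-- The polynomial part of the pmf of the Poisson distribution of order `k`, as a
polynomial: `P_n(λ) = ∑_{n₁+2n₂+⋯+k·n_k = n} λ^{n₁+⋯+n_k} / (n₁!⋯n_k!)`. -/
noncomputable def poissonOrderKPoly (k n : ℕ) : Polynomial ℝ :=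
  ∑ f ∈ ((Fintype.piFinset fun _ : Fin k => Finset.range (n + 1)).filter
      fun f => ∑ i : Fin k, (i.1 + 1) * f i = n),
    Polynomial.C ((∏ i : Fin k, (Nat.factorial (f i) : ℝ))⁻¹) *
      Polynomial.X ^ (∑ i : Fin k, f i)

theorem poissonOrderK_lowest_coeff_positive (k n r m : ℕ) (hk : 1 ≤ k)
    (hm1 : 1 ≤ m) (hmk : m ≤ k) (hn : n = r * k + m) :
    (((Fintype.piFinset fun _ : Fin k => Finset.range (n + 1)).filter
        fun f => (∑ i : Fin k, (i.1 + 1) * f i = n) ∧ (∑ i : Fin k, f i = r + 1)).Nonempty) ∧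
    (poissonOrderKPoly k n).coeff (r + 1)
        = (∑ f ∈ ((Fintype.piFinset fun _ : Fin k => Finset.range (n + 1)).filter
            fun f => (∑ i : Fin k, (i.1 + 1) * f i = n) ∧ (∑ i : Fin k, f i = r + 1)),
          (∏ i : Fin k, (Nat.factorial (f i) : ℝ))⁻¹) ∧
    0 < (poissonOrderKPoly k n).coeff (r + 1) := by
  have hmlt : m - 1 < k := by omega
  have hklt : k - 1 < k := by omega
  set a : Fin k := ⟨m - 1, hmlt⟩ with ha
  set b : Fin k := ⟨k - 1, hklt⟩ with hb
  have hav : a.1 = m - 1 := rfl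
  have hbv : b.1 = k - 1 := rfl
  have hma : ∀ i : Fin k, (i.1 + 1 = m) ↔ i = a := by
    intro i; rw [Fin.ext_iff, hav]; omega
  have hkb : ∀ i : Fin k, (i.1 + 1 = k) ↔ i = b := by
    intro i; rw [Fin.ext_iff, hbv]; omega
  set g : Fin k → ℕ := fun i =>
    (if i.1 + 1 = m then 1 else 0) + (if i.1 + 1 = k then r else 0) with hg
  have hsum1 : ∑ i : Fin k, (if i.1 + 1 = m then 1 else 0) = 1 := by
    simp [hma, Finset.sum_ite_eq']
  have hsum2 : ∑ i : Fin k, (if i.1 + 1 = k then r else 0) = r := by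
    simp [hkb, Finset.sum_ite_eq']
  have hsum1' : ∑ i : Fin k, (i.1 + 1) * (if i.1 + 1 = m then 1 else 0) = m := by
    simp only [hma, mul_ite, mul_one, mul_zero, Finset.sum_ite_eq', Finset.mem_univ, if_pos,
      hav]
    omega
  have hsum2' : ∑ i : Fin k, (i.1 + 1) * (if i.1 + 1 = k then r else 0) = k * r := by
    simp only [hkb, mul_ite, mul_zero, Finset.sum_ite_eq', Finset.mem_univ, if_pos, hbv]
    have : k - 1 + 1 = k := by omega
    rw [this]
  have hgsum : ∑ i : Fin k, g i = r + 1 := by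
    simp only [hg, Finset.sum_add_distrib, hsum1, hsum2]; omega
  have hgwsum : ∑ i : Fin k, (i.1 + 1) * g i = n := by
    have split : ∑ i : Fin k, (i.1 + 1) * g i
        = (∑ i : Fin k, (i.1 + 1) * (if i.1 + 1 = m then 1 else 0))
          + ∑ i : Fin k, (i.1 + 1) * (if i.1 + 1 = k then r else 0) := by
      rw [← Finset.sum_add_distrib]
      exact Finset.sum_congr rfl fun i _ => by rw [hg]; ring
    rw [split, hsum1', hsum2', hn]
    ring
  have hne : ((Fintype.piFinset fun _ : Fin k => Finset.range (n + 1)).filter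
      fun f => (∑ i : Fin k, (i.1 + 1) * f i = n) ∧ (∑ i : Fin k, f i = r + 1)).Nonempty := by
    refine ⟨g, Finset.mem_filter.mpr ⟨?_, hgwsum, hgsum⟩⟩
    refine Fintype.mem_piFinset.mpr fun i => Finset.mem_range.mpr ?_
    have h1 : g i ≤ (i.1 + 1) * g i := Nat.le_mul_of_pos_left (g i) (Nat.succ_pos _)
    have h2 : (i.1 + 1) * g i ≤ ∑ j : Fin k, (j.1 + 1) * g j :=
      Finset.single_le_sum (f := fun j : Fin k => (j.1 + 1) * g j)
        (fun j _ => Nat.zero_le _) (Finset.mem_univ i)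
    omega
  have hcoeff : (poissonOrderKPoly k n).coeff (r + 1)
      = ∑ f ∈ ((Fintype.piFinset fun _ : Fin k => Finset.range (n + 1)).filter
          fun f => (∑ i : Fin k, (i.1 + 1) * f i = n) ∧ (∑ i : Fin k, f i = r + 1)),
        (∏ i : Fin k, (Nat.factorial (f i) : ℝ))⁻¹ := by
    rw [poissonOrderKPoly, Polynomial.finset_sum_coeff]
    conv_rhs => rw [← Finset.filter_filter, Finset.sum_filter]
    apply Finset.sum_congr rfl
    intro f _
    rw [Polynomial.coeff_C_mul, Polynomial.coeff_X_pow]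
    by_cases h : ∑ i : Fin k, f i = r + 1
    · simp [h]
    · rw [if_neg (fun he => h he.symm), if_neg h, mul_zero]
  refine ⟨hne, hcoeff, ?_⟩
  rw [hcoeff]
  apply Finset.sum_pos _ hne
  intro f _
  positivity
end

section
/- In the Kostadinova–Minkova formula for n = ℓ(k+1)+m, ℓ ≥ 1, m ∈ {0,...,k}, the coefficients of λ^s for 1 ≤ s ≤ r (where r = ⌊(n−1)/k⌋) in the expression Σ_{j=1}^{n} C(n−1,j−1) λ^j/j! − Σ_{i=1}^{ℓ} (−1)^{i−1}(λ^i/i!) Σ_{j=0}^{n−i(k+1)} C(n−i(k+1)+i−1, j+i−1) λ^j/j! vanish identically. -/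
open Finset Polynomial

/-- The Kostadinova–Minkova expression, as a polynomial in `λ`. -/
noncomputable def kmExpr (k n ℓ : ℕ) : Polynomial ℝ :=
  (∑ j ∈ Finset.Icc 1 n,
      Polynomial.C ((Nat.choose (n - 1) (j - 1) : ℝ) / (Nat.factorial j : ℝ)) *
        Polynomial.X ^ j)
    - ∑ i ∈ Finset.Icc 1 ℓ,
        Polynomial.C ((-1 : ℝ) ^ (i - 1) / (Nat.factorial i : ℝ)) * Polynomial.X ^ i *
          ∑ j ∈ Finset.range (n - i * (k + 1) + 1),
            Polynomial.C ((Nat.choose (n - i * (k + 1) + i - 1) (j + i - 1) : ℝ) /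
              (Nat.factorial j : ℝ)) * Polynomial.X ^ j

open fwdDiff


lemma fwd_eval (q : Polynomial ℝ) :
    Δ_[1] (fun i : ℕ => q.eval (i : ℝ)) = fun i : ℕ => (q.comp (X + 1) - q).eval (i : ℝ) := by
  funext i
  simp only [fwdDiff, eval_sub, eval_comp, eval_add, eval_X, eval_one]
  push_cast
  ring

lemma deg_fwd (q : Polynomial ℝ) (s : ℕ) (hq : q.degree < (s + 1 : ℕ)) :
    (q.comp (X + 1) - q).degree < (s : ℕ) := by
  by_cases h0 : q = 0
  · simp [h0]
  · have hdq : q.degree ≤ (s : ℕ) := by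
      rw [Polynomial.degree_eq_natDegree h0] at hq ⊢
      exact_mod_cast Nat.lt_succ_iff.mp (by exact_mod_cast hq)
    have hX : (X + 1 : Polynomial ℝ).natDegree = 1 := by
      simpa using Polynomial.natDegree_X_add_C (1 : ℝ)
    have hlc : (q.comp (X + 1)).leadingCoeff = q.leadingCoeff := by
      have hm : (X + 1 : Polynomial ℝ).Monic := by
        simpa using Polynomial.monic_X_add_C (1 : ℝ)
      rw [Polynomial.leadingCoeff_comp (by rw [hX]; norm_num), hm.leadingCoeff, one_pow, mul_one]
    have hcomp0 : q.comp (X + 1) ≠ 0 := by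
      intro h
      apply h0
      rw [← Polynomial.leadingCoeff_eq_zero, ← hlc, h, Polynomial.leadingCoeff_zero]
    have hdeg : (q.comp (X + 1)).degree = q.degree := by
      rw [Polynomial.degree_eq_natDegree h0, Polynomial.degree_eq_natDegree hcomp0,
        Polynomial.natDegree_comp, hX, mul_one]
    by_cases hsub : q.comp (X + 1) - q = 0
    · rw [hsub, Polynomial.degree_zero]
      exact WithBot.bot_lt_coe s
    · calc (q.comp (X + 1) - q).degree < (q.comp (X+1)).degree :=
            Polynomial.degree_sub_lt hdeg hcomp0 hlc
        _ ≤ (s : ℕ) := hdeg ▸ hdq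

lemma fwd_iter_zero (s : ℕ) (q : Polynomial ℝ) (hq : q.degree < (s : ℕ)) :
    (fwdDiff (1:ℕ))^[s] (fun i : ℕ => q.eval (i : ℝ)) 0 = 0 := by
  induction s generalizing q with
  | zero =>
    have : q = 0 :=
      Polynomial.degree_eq_bot.mp (Nat.WithBot.lt_zero_iff.mp (by exact_mod_cast hq))
    simp [this]
  | succ s ih =>
    rw [Function.iterate_succ_apply, fwd_eval]
    exact ih _ (deg_fwd q s hq)

lemma altsum_poly (s : ℕ) (q : Polynomial ℝ) (hq : q.degree < (s : ℕ)) :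
    ∑ i ∈ range (s + 1), (-1 : ℝ) ^ i * (s.choose i : ℝ) * q.eval (i : ℝ) = 0 := by
  have h := fwd_iter_zero s q hq
  rw [fwdDiff_iter_eq_sum_shift] at h
  have h2 : ∑ i ∈ range (s + 1), (-1 : ℝ) ^ (s - i) * (s.choose i : ℝ) * q.eval (i : ℝ) = 0 := by
    rw [← h]
    apply Finset.sum_congr rfl
    intro i hi
    simp [zsmul_eq_mul]
    try ring
  have h3 := congrArg (fun x => (-1 : ℝ) ^ s * x) h2
  simp only [mul_zero, Finset.mul_sum] at h3
  rw [← h3]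
  apply Finset.sum_congr rfl
  intro i hi
  have hi' : i ≤ s := Nat.lt_succ_iff.mp (Finset.mem_range.mp hi)
  have : (-1 : ℝ) ^ s = (-1) ^ (s - i) * (-1) ^ i := by
    rw [← pow_add, Nat.sub_add_cancel hi']
  rw [this]
  have h4 : ((-1 : ℝ)) ^ ((s - i) * 2) = 1 := by
    rw [mul_comm, pow_mul, neg_one_sq, one_pow]
  linear_combination (-((s.choose i : ℝ) * q.eval (i : ℝ) * (-1) ^ i)) * h4


lemma cast_choose_prod (a d : ℕ) :
    (a.choose d : ℝ) * (d.factorial : ℝ) = ∏ t ∈ range d, ((a : ℝ) - t) := by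
  rcases le_or_gt d a with h | h
  · have h1 : ∏ t ∈ range d, ((a : ℝ) - t) = ((a.descFactorial d : ℕ) : ℝ) := by
      rw [Nat.descFactorial_eq_prod_range, Nat.cast_prod]
      apply Finset.prod_congr rfl
      intro t ht
      have : t ≤ a := le_trans (le_of_lt (Finset.mem_range.mp ht)) h
      rw [Nat.cast_sub this]
    rw [h1, Nat.descFactorial_eq_factorial_mul_choose]
    push_cast
    ring
  · rw [Nat.choose_eq_zero_of_lt h, Nat.cast_zero, zero_mul]
    symm
    apply Finset.prod_eq_zero (Finset.mem_range.mpr h)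
    simp

lemma key_altsum (s k n : ℕ) (hs : 1 ≤ s) (h1 : s * k + 1 ≤ n) :
    ∑ i ∈ range (s + 1), (-1 : ℝ) ^ i * (s.choose i : ℝ) * ((n - 1 - i * k).choose (s - 1) : ℝ)
      = 0 := by
  set q : Polynomial ℝ := ∏ t ∈ range (s - 1), (C ((n : ℝ) - 1 - t) - C (k : ℝ) * X) with hq
  have hdeg : q.degree < (s : ℕ) := by
    have h2 : q.degree ≤ ((s - 1 : ℕ) : WithBot ℕ) := by
      rw [hq]
      calc (∏ t ∈ range (s - 1), (C ((n : ℝ) - 1 - t) - C (k : ℝ) * X)).degree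
          ≤ ∑ t ∈ range (s - 1), (C ((n : ℝ) - 1 - t) - C (k : ℝ) * X).degree :=
            Polynomial.degree_prod_le _ _
        _ ≤ ∑ t ∈ range (s - 1), (1 : WithBot ℕ) := by
            apply Finset.sum_le_sum
            intro t ht
            calc (C ((n : ℝ) - 1 - t) - C (k : ℝ) * X).degree
                ≤ max (C ((n : ℝ) - 1 - t)).degree ((C (k : ℝ) * X).degree) :=
                  Polynomial.degree_sub_le _ _
              _ ≤ 1 := by
                  apply max_le (le_trans Polynomial.degree_C_le (by norm_num))
                  calc (C (k : ℝ) * X).degree ≤ (C (k:ℝ)).degree + X.degree :=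
                        Polynomial.degree_mul_le _ _
                    _ ≤ 0 + 1 := add_le_add Polynomial.degree_C_le (le_of_eq Polynomial.degree_X)
                    _ = 1 := by norm_num
        _ = ((s - 1 : ℕ) : WithBot ℕ) := by
            rw [Finset.sum_const, Finset.card_range, nsmul_eq_mul, mul_one]
    apply lt_of_le_of_lt h2
    exact_mod_cast Nat.sub_lt hs Nat.one_pos
  -- per-term evaluation
  have heval : ∀ i ∈ range (s + 1),
      q.eval (i : ℝ) = ((n - 1 - i * k).choose (s - 1) : ℝ) * ((s - 1).factorial : ℝ) := by
    intro i hi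
    have hik : i * k ≤ n - 1 := by
      have : i ≤ s := Nat.lt_succ_iff.mp (Finset.mem_range.mp hi)
      calc i * k ≤ s * k := Nat.mul_le_mul_right k this
        _ ≤ n - 1 := by omega
    rw [cast_choose_prod]
    rw [hq, Polynomial.eval_prod]
    apply Finset.prod_congr rfl
    intro t ht
    simp only [eval_sub, eval_mul, eval_C, eval_X]
    have : ((n - 1 - i * k : ℕ) : ℝ) = (n : ℝ) - 1 - i * k := by
      have h3 : 1 ≤ n := by omega
      push_cast [Nat.cast_sub hik, Nat.cast_sub h3]
      ring
    rw [this]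
    ring
  have h0 := altsum_poly s q hdeg
  have hfac : ((s - 1).factorial : ℝ) ≠ 0 := Nat.cast_ne_zero.mpr (Nat.factorial_ne_zero _)
  have h5 : (∑ i ∈ range (s + 1),
      (-1 : ℝ) ^ i * (s.choose i : ℝ) * ((n - 1 - i * k).choose (s - 1) : ℝ))
        * ((s - 1).factorial : ℝ) = 0 := by
    rw [Finset.sum_mul, ← h0]
    apply Finset.sum_congr rfl
    intro i hi
    rw [heval i hi]
    ring
  exact (mul_eq_zero.mp h5).resolve_right hfac

lemma coeff_C_mul_X_pow_mul (c : ℝ) (i s : ℕ) (p : Polynomial ℝ) :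
    (C c * X ^ i * p).coeff s = if i ≤ s then c * p.coeff (s - i) else 0 := by
  have h : C c * X ^ i * p = C c * (p * X ^ i) := by ring
  rw [h, coeff_C_mul, Polynomial.coeff_mul_X_pow']
  split <;> simp

lemma coeff_sum_C_X_pow (f : ℕ → ℝ) (N s : ℕ) :
    (∑ j ∈ Finset.range N, C (f j) * X ^ j).coeff s = if s < N then f s else 0 := by
  rw [Polynomial.finset_sum_coeff]
  simp only [Polynomial.coeff_C_mul, Polynomial.coeff_X_pow, mul_ite, mul_one, mul_zero]
  rw [Finset.sum_ite_eq (Finset.range N) s f]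
  simp [Finset.mem_range]

lemma coeff_sum_C_X_pow_Icc (f : ℕ → ℝ) (a b s : ℕ) :
    (∑ j ∈ Finset.Icc a b, C (f j) * X ^ j).coeff s = if s ∈ Finset.Icc a b then f s else 0 := by
  rw [Polynomial.finset_sum_coeff]
  simp only [Polynomial.coeff_C_mul, Polynomial.coeff_X_pow, mul_ite, mul_one, mul_zero]
  rw [Finset.sum_ite_eq (Finset.Icc a b) s f]


theorem kmExpr_low_coeffs_vanish (k n ℓ m : ℕ) (hk : 2 ≤ k) (hnk : k < n)
    (hℓ : 1 ≤ ℓ) (hm : m ≤ k) (hn : n = ℓ * (k + 1) + m) :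
    ∀ s, 1 ≤ s → s ≤ (n - 1) / k → (kmExpr k n ℓ).coeff s = 0 := by
  intro s hs1 hsr
  have hk0 : 0 < k := by omega
  have hskn : s * k ≤ n - 1 := (Nat.le_div_iff_mul_le hk0).mp hsr
  have hsn : s ≤ n - 1 := le_trans (by nlinarith) hskn
  -- the term function
  set F : ℕ → ℝ := fun i =>
    (-1 : ℝ) ^ i * (s.choose i : ℝ) * ((n - 1 - i * k).choose (s - 1) : ℝ) with hF
  -- F vanishes above ℓ
  have hFzero : ∀ i, ℓ < i → F i = 0 := by
    intro i hi
    rcases le_or_gt i s with his | his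
    · have e1 : i * (k + 1) = i * k + i := by ring
      have e2 : (ℓ + 1) * (k + 1) = ℓ * (k + 1) + k + 1 := by ring
      have h3 : (ℓ + 1) * (k + 1) ≤ i * (k + 1) := Nat.mul_le_mul_right _ (by omega)
      have h4 : n - 1 - i * k < s - 1 := by omega
      simp [hF, Nat.choose_eq_zero_of_lt h4]
    · simp [hF, Nat.choose_eq_zero_of_lt his]
  -- compute the coefficient
  have hcoeff : (kmExpr k n ℓ).coeff s =
      ((n - 1).choose (s - 1) : ℝ) / (s.factorial : ℝ)
        - ∑ i ∈ Finset.Icc 1 ℓ,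
            (if i ≤ s then ((-1 : ℝ) ^ (i - 1) / (i.factorial : ℝ)) *
              (if s - i < n - i * (k + 1) + 1 then
                ((n - i * (k + 1) + i - 1).choose (s - i + i - 1) : ℝ) /
                  ((s - i).factorial : ℝ) else 0) else 0) := by
    rw [kmExpr, Polynomial.coeff_sub]
    congr 1
    · rw [coeff_sum_C_X_pow_Icc (fun j => ((n - 1).choose (j - 1) : ℝ) / (j.factorial : ℝ))]
      rw [if_pos (Finset.mem_Icc.mpr ⟨hs1, by omega⟩)]
    · rw [Polynomial.finset_sum_coeff]
      apply Finset.sum_congr rfl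
      intro i hi
      rw [coeff_C_mul_X_pow_mul]
      congr 1
      rw [coeff_sum_C_X_pow (fun j => ((n - i * (k + 1) + i - 1).choose (j + i - 1) : ℝ) /
        (j.factorial : ℝ))]
  -- multiply by s!
  have hfac : (s.factorial : ℝ) ≠ 0 := Nat.cast_ne_zero.mpr (Nat.factorial_ne_zero _)
  have hmain : (kmExpr k n ℓ).coeff s * (s.factorial : ℝ)
      = ∑ i ∈ Finset.range (s + 1), F i := by
    have hset : Finset.range (s + 1) = insert 0 (Finset.Icc 1 s) := by
      ext x
      simp only [Finset.mem_range, Finset.mem_insert, Finset.mem_Icc]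
      omega
    have hsplit : ∑ i ∈ Finset.range (s + 1), F i = F 0 + ∑ i ∈ Finset.Icc 1 s, F i := by
      rw [hset, Finset.sum_insert (by simp)]
    have hF0 : F 0 = ((n - 1).choose (s - 1) : ℝ) := by simp [hF]
    have hterm : ∀ i ∈ Finset.Icc 1 ℓ,
        (if i ≤ s then ((-1 : ℝ) ^ (i - 1) / (i.factorial : ℝ)) *
          (if s - i < n - i * (k + 1) + 1 then
            ((n - i * (k + 1) + i - 1).choose (s - i + i - 1) : ℝ) /
              ((s - i).factorial : ℝ) else 0) else 0) * (s.factorial : ℝ) = -F i := by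
      intro i hi
      obtain ⟨hi1, hi2⟩ := Finset.mem_Icc.mp hi
      have hik1 : i * (k + 1) ≤ n :=
        le_trans (Nat.mul_le_mul_right _ hi2) (by omega)
      have e1 : i * (k + 1) = i * k + i := by ring
      split_ifs with h1 h2
      · have idx1 : n - i * (k + 1) + i - 1 = n - 1 - i * k := by omega
        have idx2 : s - i + i - 1 = s - 1 := by omega
        rw [idx1, idx2, hF]
        have hchoose : (s.choose i : ℝ) = (s.factorial : ℝ) /
            ((i.factorial : ℝ) * ((s - i).factorial : ℝ)) := Nat.cast_choose ℝ h1
        have hsign : (-1 : ℝ) ^ i = (-1) ^ (i - 1) * (-1) := by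
          rw [← pow_succ]
          congr 1
          omega
        have hif : (i.factorial : ℝ) ≠ 0 := Nat.cast_ne_zero.mpr (Nat.factorial_ne_zero _)
        have hsf : ((s - i).factorial : ℝ) ≠ 0 := Nat.cast_ne_zero.mpr (Nat.factorial_ne_zero _)
        simp only []
        rw [hchoose, hsign]
        field_simp
      · have h4 : n - 1 - i * k < s - 1 := by omega
        simp [hF, Nat.choose_eq_zero_of_lt h4]
      · have h5 : s < i := by omega
        simp [hF, Nat.choose_eq_zero_of_lt h5]
    have hB : ∑ i ∈ Finset.Icc 1 ℓ,
        ((if i ≤ s then ((-1 : ℝ) ^ (i - 1) / (i.factorial : ℝ)) *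
          (if s - i < n - i * (k + 1) + 1 then
            ((n - i * (k + 1) + i - 1).choose (s - i + i - 1) : ℝ) /
              ((s - i).factorial : ℝ) else 0) else 0) * (s.factorial : ℝ))
        = ∑ i ∈ Finset.Icc 1 ℓ, (-F i) := Finset.sum_congr rfl hterm
    have hext1 : ∑ i ∈ Finset.Icc 1 ℓ, (-F i) = ∑ i ∈ Finset.Icc 1 (max ℓ s), (-F i) := by
      apply Finset.sum_subset (Finset.Icc_subset_Icc_right (le_max_left _ _))
      intro i hi hni
      have h6 : ℓ < i := by
        simp only [Finset.mem_Icc] at hi hni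
        omega
      rw [hFzero i h6]
      ring
    have hext2 : ∑ i ∈ Finset.Icc 1 s, (-F i) = ∑ i ∈ Finset.Icc 1 (max ℓ s), (-F i) := by
      apply Finset.sum_subset (Finset.Icc_subset_Icc_right (le_max_right _ _))
      intro i hi hni
      have h6 : s < i := by
        simp only [Finset.mem_Icc] at hi hni
        omega
      simp [hF, Nat.choose_eq_zero_of_lt h6]
    have hA : ((n - 1).choose (s - 1) : ℝ) / (s.factorial : ℝ) * (s.factorial : ℝ) = F 0 := by
      rw [hF0]
      field_simp
    have hC : ∑ i ∈ Finset.Icc 1 s, F i = -∑ i ∈ Finset.Icc 1 (max ℓ s), (-F i) := by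
      rw [← hext2]
      simp
    rw [hcoeff, sub_mul, Finset.sum_mul, hsplit, hB, hext1, hA, hC]
    ring
  have hkey := key_altsum s k n hs1 (by omega)
  have h9 : (kmExpr k n ℓ).coeff s * (s.factorial : ℝ) = 0 := by
    rw [hmain, ← hkey]
  exact (mul_eq_zero.mp h9).resolve_right hfac
end
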